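/- arXiv:2204.13186 — 5 statements merged into one kernel-verified Lean document; each statement's English description precedes it below -/
import Mathlib

section
/- Let Γ be a distance-biregular graph with diameters D₀ ≤ D₁. Then D₁ − D₀ ≤ 1, and if D₁ = D₀ + 1 then D₀ is odd. -/
open Finset SimpleGraph

lemma walk_parity {V : Type} {G : SimpleGraph V} (σ : V → Fin 2)
    (hbip : ∀ x y : V, G.Adj x y → σ x ≠ σ y) {u v : V} (p : G.Walk u v) :
    (σ u = σ v ↔ Even p.length) := by
  induction p with
  | nil => simp
  | @cons a w v h q ih =>
    have hne : σ a ≠ σ w := hbip a w h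
    have h1 : (σ a).val < 2 := (σ a).isLt
    have h2 : (σ w).val < 2 := (σ w).isLt
    have h3 : (σ v).val < 2 := (σ v).isLt
    simp only [SimpleGraph.Walk.length_cons, Nat.even_add_one, ← ih]
    constructor
    · intro hav hwv
      exact hne (by rw [hav, hwv])
    · intro hwv
      simp only [Fin.ext_iff] at *
      omega

theorem stmt0 {V : Type} [Fintype V] [DecidableEq V]
    (G : SimpleGraph V) [DecidableRel G.Adj]
    (hconn : G.Connected) (hcard : 2 ≤ Fintype.card V)
    (σ : V → Fin 2)
    (hbip : ∀ x y : V, G.Adj x y → σ x ≠ σ y)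
    (k : Fin 2 → ℕ)
    (hdeg : ∀ x : V, G.degree x = k (σ x))
    (c b : Fin 2 → ℕ → ℕ)
    (hc : ∀ (x y : V) (i : ℕ), G.dist x y = i →
      (Finset.univ.filter (fun z => G.dist x z = i - 1 ∧ G.Adj y z)).card = c (σ x) i)
    (hb : ∀ (x y : V) (i : ℕ), G.dist x y = i →
      (Finset.univ.filter (fun z => G.dist x z = i + 1 ∧ G.Adj y z)).card = b (σ x) i)
    (D : Fin 2 → ℕ)
    (hDub : ∀ x y : V, G.dist x y ≤ D (σ x))
    (hDmax : ∀ ℓ : Fin 2, ∃ x y : V, σ x = ℓ ∧ G.dist x y = D ℓ)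
    (hD0 : 1 ≤ D 0) (hD01 : D 0 ≤ D 1) :
    D 1 - D 0 ≤ 1 ∧ (D 1 = D 0 + 1 → Odd (D 0)) := by
  obtain ⟨x, y, hx1, hxy⟩ := hDmax 1
  have hD1pos : 1 ≤ D 1 := le_trans hD0 hD01
  have hdne : G.dist x y ≠ 0 := by omega
  obtain ⟨p, hp⟩ := exists_walk_of_dist_ne_zero hdne
  constructor
  · -- D 1 - D 0 ≤ 1
    have hplen : p.length ≠ 0 := by omega
    cases p with
    | nil => simp at hplen
    | @cons _ w _ h q =>
      have hzw : σ w ≠ σ x := (hbip x w h).symm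
      have hw0 : σ w = 0 := by
        rw [hx1] at hzw
        simp only [Fin.ext_iff] at *
        omega
      have htri : G.dist x y ≤ G.dist x w + G.dist w y := hconn.dist_triangle
      have hxw : G.dist x w ≤ 1 := by
        have := SimpleGraph.dist_le h.toWalk
        simpa using this
      have hwyD : G.dist w y ≤ D 0 := hw0 ▸ hDub w y
      omega
  · intro hD1
    rcases Nat.even_or_odd (D 0) with he | ho
    · exfalso
      have hodd : ¬ Even p.length := by
        rw [hp, hxy, hD1]
        simp [Nat.even_add_one]; exact he
      have hsne : σ x ≠ σ y := fun hh => hodd ((walk_parity σ hbip p).mp hh)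
      have hy0 : σ y = 0 := by
        rw [hx1] at hsne
        have := (σ y).isLt
        simp only [Fin.ext_iff] at *
        omega
      have : G.dist y x ≤ D 0 := hy0 ▸ hDub y x
      rw [SimpleGraph.dist_comm, hxy, hD1] at this
      omega
    · exact ho
end

section
/- Let Γ be a distance-biregular graph. Then c_{0,2i}·c_{0,2i+1} = c_{1,2i}·c_{1,2i+1} and b_{0,2i−1}·b_{0,2i} = b_{1,2i−1}·b_{1,2i} for every integer i with 1 ≤ i ≤ ⌊(D₀ − 1)/2⌋. -/
/-!
Entry `(x, y)` of the `n`-th power of the adjacency matrix counts walks of length `n`; when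
`d(x, y) = n` these are the geodesics from `x` to `y`. Peeling off the last step shows that their
number is `c_{ℓ,1} ⋯ c_{ℓ,n}` for `x ∈ V_ℓ`, and summing over the sphere of radius `n` around `x`
gives `b_{ℓ,0} ⋯ b_{ℓ,n-1}`. The matrix is symmetric, i.e. geodesics can be reversed, and for odd
`n` reversal exchanges the two parts. Hence for every odd `n ≤ D₀`
`∏_{j ≤ n} c_{0,j} = ∏_{j ≤ n} c_{1,j}` and `|V₀| ∏_{j < n} b_{0,j} = |V₁| ∏_{j < n} b_{1,j}`,
and dividing the identities for `n = 2i + 1` and `n = 2i - 1` gives the theorem.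
-/

open Finset SimpleGraph

namespace SimpleGraph

lemma Connected.exists_dist_eq_of_le {V : Type*} {G : SimpleGraph V} (hG : G.Connected)
    {x y : V} {d : ℕ} (hd : d ≤ G.dist x y) : ∃ z, G.dist x z = d := by
  obtain ⟨w, hw⟩ := hG.exists_walk_length_eq_dist x y
  refine ⟨w.getVert d, le_antisymm ?_ ?_⟩
  · simpa [hw, hd] using dist_le (w.take d)
  · have h_drop := dist_le (w.drop d)
    have h_tri := hG.dist_triangle (u := x) (v := w.getVert d) (w := y)
    rw [Walk.drop_length] at h_drop
    omega

lemma ne_of_odd_dist {V : Type*} {G : SimpleGraph V} {σ : V → Fin 2}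
    (hσ : ∀ x y, G.Adj x y → σ x ≠ σ y) {x y : V} (h : Odd (G.dist x y)) : σ x ≠ σ y := by
  obtain ⟨p, hp⟩ := (Reachable.of_dist_ne_zero h.pos.ne').exists_walk_length_eq_dist
  let c : G.Coloring Bool := recolorOfEquiv G finTwoEquiv (Coloring.mk σ fun h => hσ _ _ h)
  have hc := (c.odd_length_iff_not_congr p).mp (hp ▸ h)
  intro hxy
  have hcxy : c x = c y := congrArg finTwoEquiv hxy
  rw [hcxy] at hc
  exact not_iff_self hc

variable {V : Type*} [Fintype V] [DecidableEq V] {G : SimpleGraph V} [DecidableRel G.Adj]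

lemma adjMatrix_pow_apply_eq_zero_of_lt_dist {n : ℕ} {u v : V} (h : n < G.dist u v) :
    (G.adjMatrix ℕ ^ n) u v = 0 := by
  rw [adjMatrix_pow_apply_eq_card_walk, Nat.cast_id, Fintype.card_eq_zero_iff]
  exact ⟨fun ⟨p, hp⟩ => h.not_ge (hp ▸ dist_le p)⟩

lemma adjMatrix_pow_dist_apply_pos {u v : V} (h : G.Reachable u v) :
    0 < (G.adjMatrix ℕ ^ G.dist u v) u v := by
  rw [adjMatrix_pow_apply_eq_card_walk, Nat.cast_id, Fintype.card_pos_iff]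
  obtain ⟨p, hp⟩ := h.exists_walk_length_eq_dist
  exact ⟨⟨p, hp⟩⟩

lemma adjMatrix_pow_succ_apply_of_dist_eq (hG : G.Connected) {n : ℕ} {x y : V}
    (h : G.dist x y = n + 1) :
    (G.adjMatrix ℕ ^ (n + 1)) x y =
      ∑ z ∈ univ.filter (fun z => G.dist x z = n ∧ G.Adj y z), (G.adjMatrix ℕ ^ n) x z := by
  rw [pow_succ, mul_adjMatrix_apply]
  refine (sum_subset (fun z hz => by simpa using (mem_filter.mp hz).2.2) fun z hz hzn => ?_).symm
  rw [mem_neighborFinset] at hz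
  have h_tri := hG.dist_triangle (u := x) (v := z) (w := y)
  rw [dist_eq_one_iff_adj.mpr hz.symm] at h_tri
  have hzn : G.dist x z ≠ n := by simpa [hz] using hzn
  exact adjMatrix_pow_apply_eq_zero_of_lt_dist (by omega)

lemma adjMatrix_pow_apply_eq_prod_of_dist_eq (hG : G.Connected) {x : V} (c : ℕ → ℕ)
    (hc : ∀ y i, G.dist x y = i →
      (univ.filter (fun z => G.dist x z = i - 1 ∧ G.Adj y z)).card = c i)
    {n : ℕ} {y : V} (h : G.dist x y = n) :
    (G.adjMatrix ℕ ^ n) x y = ∏ j ∈ range n, c (j + 1) := by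
  induction n generalizing y with
  | zero => simp [hG.dist_eq_zero_iff.mp h]
  | succ n ih =>
    have hcard := hc y (n + 1) h
    rw [Nat.add_sub_cancel] at hcard
    rw [adjMatrix_pow_succ_apply_of_dist_eq hG h,
      sum_congr rfl fun z hz => ih (mem_filter.mp hz).2.1, sum_const, hcard, smul_eq_mul,
      prod_range_succ, mul_comm]

lemma sum_adjMatrix_pow_apply_of_dist_eq (hG : G.Connected) {x : V} (b : ℕ → ℕ)
    (hb : ∀ y i, G.dist x y = i →
      (univ.filter (fun z => G.dist x z = i + 1 ∧ G.Adj y z)).card = b i) (n : ℕ) :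
    ∑ y ∈ univ.filter (G.dist x · = n), (G.adjMatrix ℕ ^ n) x y = ∏ j ∈ range n, b j := by
  induction n with
  | zero => simp [hG.dist_eq_zero_iff, filter_eq]
  | succ n ih =>
    calc ∑ y ∈ univ.filter (G.dist x · = n + 1), (G.adjMatrix ℕ ^ (n + 1)) x y
        = ∑ y ∈ univ.filter (G.dist x · = n + 1),
            ∑ z ∈ univ.filter (fun z => G.dist x z = n ∧ G.Adj y z), (G.adjMatrix ℕ ^ n) x z :=
          sum_congr rfl fun y hy => adjMatrix_pow_succ_apply_of_dist_eq hG (mem_filter.mp hy).2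
      _ = ∑ z ∈ univ.filter (G.dist x · = n),
            ∑ y ∈ univ.filter (fun y => G.dist x y = n + 1 ∧ G.Adj z y), (G.adjMatrix ℕ ^ n) x z :=
          sum_comm' fun y z => by simp only [mem_filter, mem_univ, true_and, adj_comm]; tauto
      _ = ∑ z ∈ univ.filter (G.dist x · = n), (G.adjMatrix ℕ ^ n) x z * b n :=
          sum_congr rfl fun z hz => by
            rw [sum_const, hb z n (mem_filter.mp hz).2, smul_eq_mul, mul_comm]
      _ = ∏ j ∈ range (n + 1), b j := by rw [← sum_mul, ih, prod_range_succ]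

lemma sum_sum_adjMatrix_pow_apply_of_odd {σ : V → Fin 2} (hσ : ∀ x y, G.Adj x y → σ x ≠ σ y)
    {n : ℕ} (hn : Odd n) :
    ∑ x ∈ univ.filter (σ · = 0), ∑ y ∈ univ.filter (G.dist x · = n), (G.adjMatrix ℕ ^ n) x y =
      ∑ x ∈ univ.filter (σ · = 1), ∑ y ∈ univ.filter (G.dist x · = n),
        (G.adjMatrix ℕ ^ n) x y := by
  refine (sum_comm' (s' := fun y => univ.filter (G.dist y · = n)) fun x y => ?_).trans
    (sum_congr rfl fun y _ => sum_congr rfl fun x _ => ((G.isSymm_adjMatrix.pow n).apply x y).symm)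
  simp only [mem_filter, mem_univ, true_and, dist_comm (u := y)]
  have h_parts : G.dist x y = n → (σ x = 0 ↔ σ y = 1) := fun hxy => by
    have := ne_of_odd_dist hσ (hxy ▸ hn)
    omega
  tauto

end SimpleGraph

section DistanceBiregular

variable {V : Type*} [Fintype V] [DecidableEq V] {G : SimpleGraph V} [DecidableRel G.Adj]
  {σ : V → Fin 2}

lemma prod_intersection_c_eq_of_odd {c : Fin 2 → ℕ → ℕ} (hG : G.Connected)
    (hσ : ∀ x y, G.Adj x y → σ x ≠ σ y)
    (hc : ∀ (x y : V) (i : ℕ), G.dist x y = i →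
      (univ.filter (fun z => G.dist x z = i - 1 ∧ G.Adj y z)).card = c (σ x) i)
    {x y : V} (hx : σ x = 0) {n : ℕ} (hn : Odd n) (hxy : G.dist x y = n) :
    ∏ j ∈ range n, c 0 (j + 1) = ∏ j ∈ range n, c 1 (j + 1) := by
  have hy : σ y = 1 := by
    have := ne_of_odd_dist hσ (hxy ▸ hn)
    omega
  calc ∏ j ∈ range n, c 0 (j + 1) = (G.adjMatrix ℕ ^ n) x y := by
        rw [← hx, adjMatrix_pow_apply_eq_prod_of_dist_eq hG _ (hc x) hxy]
    _ = (G.adjMatrix ℕ ^ n) y x := (G.isSymm_adjMatrix.pow n).apply y x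
    _ = ∏ j ∈ range n, c 1 (j + 1) := by
        rw [← hy, adjMatrix_pow_apply_eq_prod_of_dist_eq hG _ (hc y) (dist_comm.trans hxy)]

lemma card_mul_prod_intersection_b_eq_of_odd {b : Fin 2 → ℕ → ℕ} (hG : G.Connected)
    (hσ : ∀ x y, G.Adj x y → σ x ≠ σ y)
    (hb : ∀ (x y : V) (i : ℕ), G.dist x y = i →
      (univ.filter (fun z => G.dist x z = i + 1 ∧ G.Adj y z)).card = b (σ x) i)
    {n : ℕ} (hn : Odd n) :
    #(univ.filter (σ · = 0)) * ∏ j ∈ range n, b 0 j =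
      #(univ.filter (σ · = 1)) * ∏ j ∈ range n, b 1 j := by
  have h_part : ∀ ℓ, ∑ x ∈ univ.filter (σ · = ℓ), ∑ y ∈ univ.filter (G.dist x · = n),
      (G.adjMatrix ℕ ^ n) x y = #(univ.filter (σ · = ℓ)) * ∏ j ∈ range n, b ℓ j := fun ℓ => by
    rw [← smul_eq_mul, ← sum_const]
    refine sum_congr rfl fun x hx => ?_
    rw [← (mem_filter.mp hx).2]
    exact sum_adjMatrix_pow_apply_of_dist_eq hG _ (hb x) n
  rw [← h_part, ← h_part, sum_sum_adjMatrix_pow_apply_of_odd hσ hn]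

end DistanceBiregular

lemma Nat.mul_eq_mul_of_mul_prod_range_eq {f g : ℕ → ℕ} {a a' m : ℕ}
    (hpos : 0 < a * ∏ j ∈ range m, f j)
    (hm : a * ∏ j ∈ range m, f j = a' * ∏ j ∈ range m, g j)
    (hm2 : a * ∏ j ∈ range (m + 2), f j = a' * ∏ j ∈ range (m + 2), g j) :
    f m * f (m + 1) = g m * g (m + 1) := by
  simp only [prod_range_succ] at hm2
  refine Nat.eq_of_mul_eq_mul_left hpos ?_
  calc a * (∏ j ∈ range m, f j) * (f m * f (m + 1))
      = a * ((∏ j ∈ range m, f j) * f m * f (m + 1)) := by ring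
    _ = a' * ((∏ j ∈ range m, g j) * g m * g (m + 1)) := hm2
    _ = a * (∏ j ∈ range m, f j) * (g m * g (m + 1)) := by rw [hm]; ring

theorem stmt3_general {V : Type} [Fintype V]
    (G : SimpleGraph V) [DecidableRel G.Adj]
    (hconn : G.Connected)
    (σ : V → Fin 2)
    (hbip : ∀ x y : V, G.Adj x y → σ x ≠ σ y)
    (c b : Fin 2 → ℕ → ℕ)
    (hc : ∀ (x y : V) (i : ℕ), G.dist x y = i →
      (Finset.univ.filter (fun z => G.dist x z = i - 1 ∧ G.Adj y z)).card = c (σ x) i)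
    (hb : ∀ (x y : V) (i : ℕ), G.dist x y = i →
      (Finset.univ.filter (fun z => G.dist x z = i + 1 ∧ G.Adj y z)).card = b (σ x) i)
    (D : Fin 2 → ℕ)
    (hDmax : ∀ ℓ : Fin 2, ∃ x y : V, σ x = ℓ ∧ G.dist x y = D ℓ) :
    ∀ i : ℕ, 1 ≤ i → i ≤ (D 0 - 1) / 2 →
      c 0 (2 * i) * c 0 (2 * i + 1) = c 1 (2 * i) * c 1 (2 * i + 1) ∧
      b 0 (2 * i - 1) * b 0 (2 * i) = b 1 (2 * i - 1) * b 1 (2 * i) := by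
  classical
  intro i hi hiD
  obtain ⟨x, y, hx, hxy⟩ := hDmax 0
  obtain ⟨m, hm⟩ : ∃ m, 2 * i = m + 1 := ⟨2 * i - 1, by omega⟩
  have hm_odd : Odd m := ⟨i - 1, by omega⟩
  have hm2_odd : Odd (m + 2) := hm_odd.add_even even_two
  obtain ⟨z, hz⟩ := hconn.exists_dist_eq_of_le (x := x) (y := y) (d := m) (by omega)
  obtain ⟨z', hz'⟩ := hconn.exists_dist_eq_of_le (x := x) (y := y) (d := m + 2) (by omega)
  have hA_pos : 0 < (G.adjMatrix ℕ ^ m) x z := hz ▸ adjMatrix_pow_dist_apply_pos (hconn x z)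
  have hc_pos : 0 < 1 * ∏ j ∈ range m, c 0 (j + 1) := by
    rwa [one_mul, ← hx, ← adjMatrix_pow_apply_eq_prod_of_dist_eq hconn _ (hc x) hz]
  have hb_pos : 0 < #(univ.filter (σ · = 0)) * ∏ j ∈ range m, b 0 j := by
    refine Nat.mul_pos (card_pos.mpr ⟨x, by simpa using hx⟩) ?_
    rw [← hx, ← sum_adjMatrix_pow_apply_of_dist_eq hconn _ (hb x)]
    exact hA_pos.trans_le (single_le_sum (fun _ _ => Nat.zero_le _) (by simpa using hz))
  rw [hm, Nat.add_sub_cancel]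
  exact ⟨Nat.mul_eq_mul_of_mul_prod_range_eq (f := fun j => c 0 (j + 1))
      (g := fun j => c 1 (j + 1)) hc_pos
      (by rw [prod_intersection_c_eq_of_odd hconn hbip hc hx hm_odd hz])
      (by rw [prod_intersection_c_eq_of_odd hconn hbip hc hx hm2_odd hz']),
    Nat.mul_eq_mul_of_mul_prod_range_eq hb_pos
      (card_mul_prod_intersection_b_eq_of_odd hconn hbip hb hm_odd)
      (card_mul_prod_intersection_b_eq_of_odd hconn hbip hb hm2_odd)⟩

theorem stmt3 {V : Type} [Fintype V] [DecidableEq V]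
    (G : SimpleGraph V) [DecidableRel G.Adj]
    (hconn : G.Connected) (hcard : 2 ≤ Fintype.card V)
    (σ : V → Fin 2)
    (hbip : ∀ x y : V, G.Adj x y → σ x ≠ σ y)
    (k : Fin 2 → ℕ)
    (hdeg : ∀ x : V, G.degree x = k (σ x))
    (c b : Fin 2 → ℕ → ℕ)
    (hc : ∀ (x y : V) (i : ℕ), G.dist x y = i →
      (Finset.univ.filter (fun z => G.dist x z = i - 1 ∧ G.Adj y z)).card = c (σ x) i)
    (hb : ∀ (x y : V) (i : ℕ), G.dist x y = i →
      (Finset.univ.filter (fun z => G.dist x z = i + 1 ∧ G.Adj y z)).card = b (σ x) i)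
    (D : Fin 2 → ℕ)
    (hDub : ∀ x y : V, G.dist x y ≤ D (σ x))
    (hDmax : ∀ ℓ : Fin 2, ∃ x y : V, σ x = ℓ ∧ G.dist x y = D ℓ)
    (hD0 : 1 ≤ D 0) (hD01 : D 0 ≤ D 1) :
    ∀ i : ℕ, 1 ≤ i → i ≤ (D 0 - 1) / 2 →
      c 0 (2 * i) * c 0 (2 * i + 1) = c 1 (2 * i) * c 1 (2 * i + 1) ∧
      b 0 (2 * i - 1) * b 0 (2 * i) = b 1 (2 * i - 1) * b 1 (2 * i) :=
  stmt3_general G hconn σ hbip c b hc hb D hDmax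
end

section
/- Let Γ be a distance-biregular graph and ℓ ∈ {0,1}. If i, j ≥ 1, i + j is even, and i + j ≤ D_ℓ, then c_{ℓ,i} ≤ b_{ℓ,j}. -/
/-!
Take `x ∈ V_ℓ` and `y` with `d(x, y) = i + j`, and `z` on a geodesic from `x` to `y` with
`d(x, z) = i`, `d(z, y) = j`. A neighbour of `z` at distance `i - 1` from `x` is, by the
triangle inequality through it, at distance `j + 1` from `y`. As `i + j` is even, `y` also lies
in `V_ℓ`, so counting these neighbours of `z` gives `c_{ℓ,i} ≤ b_{ℓ,j}`.
-/

open Finset SimpleGraph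

namespace SimpleGraph

variable {V : Type*} {G : SimpleGraph V} {x y z u : V}

theorem Coloring.even_length_iff_eq (C : G.Coloring (Fin 2)) (p : G.Walk x y) :
    Even p.length ↔ C x = C y := by
  induction p with
  | nil => simp
  | cons h p ih =>
    rw [Walk.length_cons, Nat.even_add_one, ih]
    have := C.valid h
    omega

theorem Reachable.exists_dist_eq_and_dist_eq_sub (hr : G.Reachable x y) {m : ℕ}
    (hm : m ≤ G.dist x y) : ∃ z, G.dist x z = m ∧ G.dist z y = G.dist x y - m := by
  obtain ⟨p, hp⟩ := hr.exists_walk_length_eq_dist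
  refine ⟨p.getVert m, ?_⟩
  have h₁ := dist_le (p.take m)
  have h₂ := dist_le (p.drop m)
  rw [Walk.take_length] at h₁
  rw [Walk.drop_length] at h₂
  obtain ⟨q₁, hq₁⟩ := (p.take m).reachable.exists_walk_length_eq_dist
  obtain ⟨q₂, hq₂⟩ := (p.drop m).reachable.exists_walk_length_eq_dist
  have h₃ := dist_le (q₁.append q₂)
  rw [Walk.length_append] at h₃
  constructor <;> omega

theorem Connected.dist_eq_add_one_of_adj (hconn : G.Connected)
    (hxy : G.dist x y = G.dist x z + G.dist z y) (hzu : G.Adj z u)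
    (hxu : G.dist x u + 1 = G.dist x z) : G.dist u y = G.dist z y + 1 := by
  have h₁ : G.dist u y ≤ G.dist u z + G.dist z y := hconn.dist_triangle
  have h₂ : G.dist x y ≤ G.dist x u + G.dist u y := hconn.dist_triangle
  rw [dist_eq_one_iff_adj.mpr hzu.symm] at h₁
  omega

end SimpleGraph

theorem stmt5_general {V : Type} [Fintype V]
    (G : SimpleGraph V) [DecidableRel G.Adj]
    (hconn : G.Connected)
    (σ : V → Fin 2)
    (hbip : ∀ x y : V, G.Adj x y → σ x ≠ σ y)
    (c b : Fin 2 → ℕ → ℕ)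
    (hc : ∀ (x y : V) (i : ℕ), G.dist x y = i →
      (Finset.univ.filter (fun z => G.dist x z = i - 1 ∧ G.Adj y z)).card = c (σ x) i)
    (hb : ∀ (x y : V) (i : ℕ), G.dist x y = i →
      (Finset.univ.filter (fun z => G.dist x z = i + 1 ∧ G.Adj y z)).card = b (σ x) i)
    (D : Fin 2 → ℕ)
    (hDmax : ∀ ℓ : Fin 2, ∃ x y : V, σ x = ℓ ∧ G.dist x y = D ℓ) :
    ∀ (ℓ : Fin 2) (i j : ℕ), 1 ≤ i → 1 ≤ j → Even (i + j) → i + j ≤ D ℓ →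
      c ℓ i ≤ b ℓ j := by
  intro ℓ i j hi hj hij hle
  obtain ⟨x, y₀, rfl, hxy₀⟩ := hDmax ℓ
  obtain ⟨y, hxy, -⟩ := (hconn x y₀).exists_dist_eq_and_dist_eq_sub (hxy₀ ▸ hle)
  obtain ⟨z, hxz, hzy⟩ := (hconn x y).exists_dist_eq_and_dist_eq_sub (m := i) (by omega)
  have hσ : σ x = σ y := by
    obtain ⟨p, hp⟩ := hconn.exists_walk_length_eq_dist x y
    exact ((Coloring.mk σ (hbip _ _)).even_length_iff_eq p).mp (by rwa [hp, hxy])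
  rw [← hc x z i hxz, hσ, ← hb y z j (by rw [dist_comm]; omega)]
  refine card_le_card fun u hu => ?_
  simp only [mem_filter, mem_univ, true_and] at hu ⊢
  refine ⟨?_, hu.2⟩
  rw [dist_comm, hconn.dist_eq_add_one_of_adj (x := x) (by omega) hu.2 (by omega)]
  omega

theorem stmt5 {V : Type} [Fintype V] [DecidableEq V]
    (G : SimpleGraph V) [DecidableRel G.Adj]
    (hconn : G.Connected) (hcard : 2 ≤ Fintype.card V)
    (σ : V → Fin 2)
    (hbip : ∀ x y : V, G.Adj x y → σ x ≠ σ y)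
    (k : Fin 2 → ℕ)
    (hdeg : ∀ x : V, G.degree x = k (σ x))
    (c b : Fin 2 → ℕ → ℕ)
    (hc : ∀ (x y : V) (i : ℕ), G.dist x y = i →
      (Finset.univ.filter (fun z => G.dist x z = i - 1 ∧ G.Adj y z)).card = c (σ x) i)
    (hb : ∀ (x y : V) (i : ℕ), G.dist x y = i →
      (Finset.univ.filter (fun z => G.dist x z = i + 1 ∧ G.Adj y z)).card = b (σ x) i)
    (D : Fin 2 → ℕ)
    (hDub : ∀ x y : V, G.dist x y ≤ D (σ x))
    (hDmax : ∀ ℓ : Fin 2, ∃ x y : V, σ x = ℓ ∧ G.dist x y = D ℓ)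
    (hD0 : 1 ≤ D 0) (hD01 : D 0 ≤ D 1) :
    ∀ (ℓ : Fin 2) (i j : ℕ), 1 ≤ i → 1 ≤ j → Even (i + j) → i + j ≤ D ℓ →
      c ℓ i ≤ b ℓ j :=
  stmt5_general G hconn σ hbip c b hc hb D hDmax
end

section
/- Let Γ be a distance-biregular graph with k₀ > k₁. Then for every 1 ≤ i ≤ D₀ − 1: if i is even, k₀·b_{1,i} < k₁·b_{0,i} and k₁·c_{0,i} < k₀·c_{1,i} (i.e., b_{1,i}/b_{0,i} < k₁/k₀ < c_{1,i}/c_{0,i}); and if i is odd, k₀·b_{0,i} < k₁·b_{1,i} and k₁·c_{1,i} < k₀·c_{0,i} (i.e., b_{0,i}/b_{1,i} < k₁/k₀ < c_{0,i}/c_{1,i}). -/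
/-!
Fix `x ∈ V₀` and a neighbour `y` of `x`, and count the edges between the shells
`Γ_i(x) ∩ Γ_{i+1}(y)` and `Γ_{i+1}(x) ∩ Γ_i(y)` from either side: each count is linear in the
intersection numbers. Summing over `y` and comparing with `|Γ_i(x)| b_{0,i} = |Γ_{i+1}(x)| c_{0,i+1}`
gives `c_{0,i} c_{0,i+1} = c_{1,i} c_{1,i+1}` for even `i` and `b_{0,i} b_{0,i+1} = b_{1,i} b_{1,i+1}`
for odd `i`. As `c_{0,1} = c_{1,1} = 1`, the inequality holds at `i = 1`, and these identities carry
it from `i` to `i + 1`, alternately in its `c`-form and in its `b`-form; the two forms are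
equivalent because `c_{ℓ,i} + b_{ℓ,i}` is a valency.
-/

open Finset SimpleGraph

theorem Fin.two_eq_add_one_of_ne {a b : Fin 2} (h : a ≠ b) : b = a + 1 := by
  revert a b; decide

theorem Finset.card_filter_add_card_filter_of_iff {α : Type*} {s : Finset α} {p q r : α → Prop}
    [DecidablePred p] [DecidablePred q] [DecidablePred r] (hpq : ∀ a ∈ s, p a → ¬ q a)
    (hr : ∀ a ∈ s, r a ↔ p a ∨ q a) : #{a ∈ s | p a} + #{a ∈ s | q a} = #{a ∈ s | r a} := by
  classical
  rw [← card_union_of_disjoint (disjoint_filter.2 hpq), ← filter_or]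
  exact congrArg card (filter_congr fun a ha => (hr a ha).symm)

theorem Finset.sum_add_mul_eq_mul {ι R : Type*} [NonUnitalNonAssocSemiring R] {s : Finset ι}
    {f g : ι → R} {m n : R} (h : ∀ i ∈ s, f i + g i * m = g i * n) :
    ∑ i ∈ s, f i + (∑ i ∈ s, g i) * m = (∑ i ∈ s, g i) * n := by
  rw [sum_mul, sum_mul, ← sum_add_distrib]
  exact sum_congr rfl h

theorem Finset.sum_add_card_mul_eq {ι : Type*} {s : Finset ι} {f : ι → ℕ} {m n : ℕ}
    (h : ∀ i ∈ s, f i + m = n) : ∑ i ∈ s, f i + #s * m = #s * n := by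
  rw [← sum_const_nat h, sum_add_distrib, sum_const, smul_eq_mul]

theorem Nat.mul_lt_mul_of_mul_eq_mul {p q a b a' b' : ℕ} (h : p * a < q * b)
    (he : a * a' = b * b') (ha' : 0 < a') : p * b' < q * a' := by
  have hb : 0 < b := Nat.pos_of_ne_zero (by rintro rfl; simp at h)
  refine Nat.lt_of_mul_lt_mul_right (a := b) ?_
  calc p * b' * b = p * (a * a') := by rw [he]; ring
    _ = p * a * a' := by ring
    _ < q * b * a' := Nat.mul_lt_mul_of_pos_right h ha'
    _ = q * a' * b := by ring

theorem Nat.mul_lt_mul_iff_of_add_eq {p q c b c' b' : ℕ} (h : c + b = p) (h' : c' + b' = q) :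
    q * c < p * c' ↔ p * b' < q * b := by
  subst h h'
  constructor <;> intro <;> nlinarith

namespace SimpleGraph

variable {V : Type*} {G : SimpleGraph V}

theorem Walk.dist_getVert_of_length_eq_dist {u v : V} (p : G.Walk u v)
    (hp : p.length = G.dist u v) {j : ℕ} (hj : j ≤ p.length) : G.dist u (p.getVert j) = j := by
  rw [← length_eq_dist_of_subwalk hp (p.isSubwalk_take j), Walk.take_length, min_eq_left hj]

theorem Connected.exists_dist_eq (hG : G.Connected) {x v : V} {j : ℕ} (hj : j ≤ G.dist x v) :
    ∃ z, G.dist x z = j := by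
  obtain ⟨p, hp⟩ := hG.exists_walk_length_eq_dist x v
  exact ⟨p.getVert j, p.dist_getVert_of_length_eq_dist hp (by omega)⟩

theorem Connected.exists_adj_dist_le (hG : G.Connected) {x v : V} (hv : 0 < G.dist x v) :
    ∃ y, G.Adj x y ∧ G.dist x v ≤ G.dist y v + 1 := by
  obtain ⟨p, hp⟩ := hG.exists_walk_length_eq_dist x v
  have hy := p.dist_getVert_of_length_eq_dist hp (j := 1) (by omega)
  refine ⟨p.getVert 1, dist_eq_one_iff_adj.1 hy, ?_⟩
  have := hG.dist_triangle (u := x) (v := p.getVert 1) (w := v)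
  omega

theorem Connected.exists_adj_dist_eq (hG : G.Connected) {x v : V} {j : ℕ}
    (hj : j < G.dist x v) : ∃ z w, G.Adj z w ∧ G.dist x z = j ∧ G.dist x w = j + 1 := by
  obtain ⟨p, hp⟩ := hG.exists_walk_length_eq_dist x v
  exact ⟨p.getVert j, p.getVert (j + 1), p.adj_getVert_succ (by omega),
    p.dist_getVert_of_length_eq_dist hp (by omega), p.dist_getVert_of_length_eq_dist hp (by omega)⟩

variable {σ : V → Fin 2}

theorem Walk.color_eq_iff_even_length (hσ : ∀ x y, G.Adj x y → σ x ≠ σ y) {u v : V}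
    (p : G.Walk u v) : σ u = σ v ↔ Even p.length := by
  induction p with
  | nil => simp
  | cons h q ih =>
    rw [Walk.length_cons, Nat.even_add_one, ← ih]
    have := hσ _ _ h
    revert this; generalize σ _ = a; generalize σ _ = b; generalize σ _ = d
    revert a b d; decide

theorem Connected.color_eq_iff_even_dist (hG : G.Connected) (hσ : ∀ x y, G.Adj x y → σ x ≠ σ y)
    (u v : V) : σ u = σ v ↔ Even (G.dist u v) := by
  obtain ⟨p, hp⟩ := hG.exists_walk_length_eq_dist u v
  rw [← hp, p.color_eq_iff_even_length hσ]

theorem Connected.color_eq_of_even_dist (hG : G.Connected) (hσ : ∀ x y, G.Adj x y → σ x ≠ σ y)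
    {u v : V} (h : Even (G.dist u v)) : σ v = σ u :=
  ((hG.color_eq_iff_even_dist hσ u v).2 h).symm

theorem Connected.color_eq_add_one_of_odd_dist (hG : G.Connected)
    (hσ : ∀ x y, G.Adj x y → σ x ≠ σ y) {u v : V} (h : Odd (G.dist u v)) : σ v = σ u + 1 :=
  Fin.two_eq_add_one_of_ne fun he =>
    Nat.not_odd_iff_even.2 ((hG.color_eq_iff_even_dist hσ u v).1 he) h

theorem Connected.dist_eq_add_one_or_of_adj (hG : G.Connected)
    (hσ : ∀ x y, G.Adj x y → σ x ≠ σ y) {z w : V} (h : G.Adj z w) (x : V) :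
    G.dist x w = G.dist x z + 1 ∨ G.dist x z = G.dist x w + 1 := by
  have hne : G.dist x w ≠ G.dist x z := fun he => by
    have hz := hG.color_eq_iff_even_dist hσ x z
    rw [← he, ← hG.color_eq_iff_even_dist hσ x w] at hz
    have := hσ z w h
    revert hz this; generalize σ x = a; generalize σ z = b; generalize σ w = d
    revert a b d; decide
  rcases h.diff_dist_adj (u := x) with h' | h' | h' <;> omega

variable [Fintype V]

variable (G) in
noncomputable def sphere (x : V) (i : ℕ) : Finset V := {z | G.dist x z = i}

variable (G) in
noncomputable def shell (x y : V) (i : ℕ) : Finset V := {z ∈ G.sphere x i | G.dist y z = i + 1}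

@[simp] theorem mem_sphere {x z : V} {i : ℕ} : z ∈ G.sphere x i ↔ G.dist x z = i := by
  simp [sphere]

@[simp] theorem mem_shell {x y z : V} {i : ℕ} :
    z ∈ G.shell x y i ↔ G.dist x z = i ∧ G.dist y z = i + 1 := by
  simp [shell]

variable [DecidableRel G.Adj]

variable (G) in
noncomputable def shellEdgeCount (x y : V) (i : ℕ) : ℕ :=
  ∑ z ∈ G.shell x y i, #{w ∈ G.shell y x i | G.Adj z w}

theorem shellEdgeCount_comm (x y : V) (i : ℕ) :
    G.shellEdgeCount x y i = G.shellEdgeCount y x i := by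
  unfold shellEdgeCount
  refine (sum_card_bipartiteAbove_eq_sum_card_bipartiteBelow G.Adj).trans ?_
  exact sum_congr rfl fun w _ => congrArg card (filter_congr fun z _ => G.adj_comm z w)

theorem card_sphere_filter_adj (x z : V) (i : ℕ) :
    #{w ∈ G.sphere x i | G.Adj z w} = #{w ∈ G.neighborFinset z | G.dist x w = i} :=
  congrArg card (by ext; simp [and_comm])

theorem card_shell_filter_adj (x y z : V) (i : ℕ) :
    #{w ∈ G.shell x y i | G.Adj z w} =
      #{w ∈ G.neighborFinset z | G.dist x w = i ∧ G.dist y w = i + 1} :=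
  congrArg card (by ext; simp [and_comm])

variable (G) in
/-- The intersection-number axioms of a distance-biregular graph whose bipartition is given by the
colouring `σ`; biregularity follows from them (`c_add_b`). -/
structure IsDistanceBiregular (σ : V → Fin 2) (c b : Fin 2 → ℕ → ℕ) : Prop where
  connected : G.Connected
  color_ne_of_adj : ∀ x y, G.Adj x y → σ x ≠ σ y
  card_c : ∀ x y, #{z ∈ G.neighborFinset y | G.dist x z = G.dist x y - 1} = c (σ x) (G.dist x y)
  card_b : ∀ x y, #{z ∈ G.neighborFinset y | G.dist x z = G.dist x y + 1} = b (σ x) (G.dist x y)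

namespace IsDistanceBiregular

variable {c b : Fin 2 → ℕ → ℕ}

theorem dist_eq_add_one_or_of_adj (h : IsDistanceBiregular G σ c b) {z w : V} (hzw : G.Adj z w)
    (x : V) : G.dist x w = G.dist x z + 1 ∨ G.dist x z = G.dist x w + 1 :=
  h.connected.dist_eq_add_one_or_of_adj h.color_ne_of_adj hzw x

theorem color_eq_add_one_of_adj (h : IsDistanceBiregular G σ c b) {x y : V} (hxy : G.Adj x y) :
    σ y = σ x + 1 :=
  Fin.two_eq_add_one_of_ne (h.color_ne_of_adj x y hxy)

theorem c_add_b (h : IsDistanceBiregular G σ c b) (u v : V) :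
    c (σ u) (G.dist u v) + b (σ u) (G.dist u v) = G.degree v := by
  rw [← h.card_c, ← h.card_b, ← card_neighborFinset_eq_degree]
  simpa using card_filter_add_card_filter_of_iff (s := G.neighborFinset v) (r := fun _ => True)
    (fun w _ h₁ h₂ => by omega) fun w hw => by
      have := h.dist_eq_add_one_or_of_adj ((mem_neighborFinset ..).1 hw) u
      simp only [true_iff]
      omega

theorem card_shell_filter_adj_add_c (h : IsDistanceBiregular G σ c b) {x y z : V} {i : ℕ}
    (hxy : G.Adj x y) (hz : z ∈ G.shell x y i) :
    #{w ∈ G.shell y x i | G.Adj z w} + c (σ x) i = c (σ y) (i + 1) := by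
  obtain ⟨hxz, hyz⟩ := mem_shell.1 hz
  rw [← hxz, ← h.card_c, hxz, ← hyz, ← h.card_c, hyz, card_shell_filter_adj]
  -- a neighbour of `z` at distance `i` from `y` is at distance `i + 1` or `i - 1` from `x`
  refine card_filter_add_card_filter_of_iff (fun w _ h₁ h₂ => by omega) fun w hw => ?_
  have hzw := (mem_neighborFinset ..).1 hw
  have := h.dist_eq_add_one_or_of_adj hzw x
  have := h.dist_eq_add_one_or_of_adj hzw y
  have := h.dist_eq_add_one_or_of_adj hxy w
  rw [G.dist_comm (u := w), G.dist_comm (u := w)] at this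
  omega

theorem card_shell_filter_adj_add_b (h : IsDistanceBiregular G σ c b) {x y z : V} {i : ℕ}
    (hxy : G.Adj x y) (hz : z ∈ G.shell x y i) :
    #{w ∈ G.shell y x i | G.Adj z w} + b (σ y) (i + 1) = b (σ x) i := by
  obtain ⟨hxz, hyz⟩ := mem_shell.1 hz
  rw [← hxz, ← h.card_b, hxz, ← hyz, ← h.card_b, hyz, card_shell_filter_adj]
  -- a neighbour of `z` at distance `i + 1` from `x` is at distance `i` or `i + 2` from `y`
  refine card_filter_add_card_filter_of_iff (fun w _ h₁ h₂ => by omega) fun w hw => ?_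
  have hzw := (mem_neighborFinset ..).1 hw
  have := h.dist_eq_add_one_or_of_adj hzw x
  have := h.dist_eq_add_one_or_of_adj hzw y
  have := h.dist_eq_add_one_or_of_adj hxy w
  rw [G.dist_comm (u := w), G.dist_comm (u := w)] at this
  omega

theorem shellEdgeCount_add_c (h : IsDistanceBiregular G σ c b) {x y : V} (hxy : G.Adj x y)
    (i : ℕ) : G.shellEdgeCount x y i + #(G.shell x y i) * c (σ x) i =
      #(G.shell x y i) * c (σ y) (i + 1) :=
  sum_add_card_mul_eq fun _ hz => h.card_shell_filter_adj_add_c hxy hz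

theorem shellEdgeCount_add_b (h : IsDistanceBiregular G σ c b) {x y : V} (hxy : G.Adj x y)
    (i : ℕ) : G.shellEdgeCount x y i + #(G.shell x y i) * b (σ y) (i + 1) =
      #(G.shell x y i) * b (σ x) i :=
  sum_add_card_mul_eq fun _ hz => h.card_shell_filter_adj_add_b hxy hz

theorem card_sphere_mul_b (h : IsDistanceBiregular G σ c b) (x : V) (i : ℕ) :
    #(G.sphere x i) * b (σ x) i = #(G.sphere x (i + 1)) * c (σ x) (i + 1) := by
  refine card_mul_eq_card_mul G.Adj (fun z hz => ?_) fun w hw => ?_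
  · rw [mem_sphere] at hz
    rw [bipartiteAbove, card_sphere_filter_adj, ← hz, h.card_b]
  · rw [mem_sphere] at hw
    rw [bipartiteBelow, ← hw, ← h.card_c, hw, add_tsub_cancel_right, ← card_sphere_filter_adj]
    exact congrArg card (filter_congr fun z _ => G.adj_comm z w)

theorem sum_card_shell (h : IsDistanceBiregular G σ c b) (x : V) (i : ℕ) :
    ∑ y ∈ G.neighborFinset x, #(G.shell x y i) = ∑ z ∈ G.sphere x i, b (σ z) i := by
  refine (sum_card_bipartiteAbove_eq_sum_card_bipartiteBelow (fun y z => G.dist y z = i + 1)).trans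
    (sum_congr rfl fun z hz => ?_)
  rw [mem_sphere, G.dist_comm] at hz
  rw [← hz, ← h.card_b, bipartiteBelow]
  exact congrArg card (filter_congr fun y _ => by rw [hz, G.dist_comm])

theorem sum_card_shell_swap (h : IsDistanceBiregular G σ c b) (x : V) (i : ℕ) :
    ∑ y ∈ G.neighborFinset x, #(G.shell y x i) = ∑ w ∈ G.sphere x (i + 1), c (σ w) (i + 1) := by
  have hshell : ∀ y, #(G.shell y x i) = #{w ∈ G.sphere x (i + 1) | G.dist y w = i} :=
    fun y => congrArg card (by ext; simp [and_comm])
  simp_rw [hshell]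
  refine (sum_card_bipartiteAbove_eq_sum_card_bipartiteBelow (fun y w => G.dist y w = i)).trans
    (sum_congr rfl fun w hw => ?_)
  rw [mem_sphere, G.dist_comm] at hw
  rw [← hw, ← h.card_c, bipartiteBelow]
  exact congrArg card (filter_congr fun y _ => by rw [hw, G.dist_comm]; omega)

theorem c_one (h : IsDistanceBiregular G σ c b) {x y : V} (hxy : G.dist x y = 1) :
    c (σ x) 1 = 1 := by
  rw [← hxy, ← h.card_c, hxy, card_eq_one]
  refine ⟨x, eq_singleton_iff_unique_mem.2 ⟨?_, fun z hz => ?_⟩⟩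
  · simpa [adj_comm] using hxy
  · exact (h.connected.dist_eq_zero_iff.1 (mem_filter.1 hz).2).symm

theorem b_pos (h : IsDistanceBiregular G σ c b) {x v : V} {j : ℕ} (hj : j < G.dist x v) :
    0 < b (σ x) j := by
  obtain ⟨z, w, hzw, hz, hw⟩ := h.connected.exists_adj_dist_eq hj
  rw [← hz, ← h.card_b]
  exact card_pos.2 ⟨w, by simp [hzw, hz, hw]⟩

theorem c_pos (h : IsDistanceBiregular G σ c b) {x v : V} {j : ℕ} (hj : j < G.dist x v) :
    0 < c (σ x) (j + 1) := by
  obtain ⟨z, w, hzw, hz, hw⟩ := h.connected.exists_adj_dist_eq hj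
  rw [← hw, ← h.card_c]
  exact card_pos.2 ⟨z, by simp [hzw.symm, hz, hw]⟩

theorem card_sphere_pos (h : IsDistanceBiregular G σ c b) {x v : V} {j : ℕ}
    (hj : j ≤ G.dist x v) : 0 < #(G.sphere x j) := by
  obtain ⟨z, hz⟩ := h.connected.exists_dist_eq hj
  exact card_pos.2 ⟨z, mem_sphere.2 hz⟩

theorem c_mul_c_eq (h : IsDistanceBiregular G σ c b) {x v : V} {i : ℕ} (hi : Even i)
    (hiv : i < G.dist x v) :
    c (σ x) i * c (σ x) (i + 1) = c (σ x + 1) i * c (σ x + 1) (i + 1) := by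
  have hN : ∀ y ∈ G.neighborFinset x, σ y = σ x + 1 := fun y hy =>
    h.color_eq_add_one_of_adj ((mem_neighborFinset ..).1 hy)
  have hA : ∑ y ∈ G.neighborFinset x, #(G.shell x y i) =
      #(G.sphere x (i + 1)) * c (σ x) (i + 1) := by
    rw [h.sum_card_shell, sum_const_nat fun z hz => ?_, h.card_sphere_mul_b]
    rw [h.connected.color_eq_of_even_dist h.color_ne_of_adj ((mem_sphere.1 hz).symm ▸ hi)]
  have hA' : ∑ y ∈ G.neighborFinset x, #(G.shell y x i) =
      #(G.sphere x (i + 1)) * c (σ x + 1) (i + 1) := by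
    rw [h.sum_card_shell_swap, sum_const_nat fun w hw => ?_]
    rw [h.connected.color_eq_add_one_of_odd_dist h.color_ne_of_adj
      ((mem_sphere.1 hw).symm ▸ hi.add_one)]
  -- the edges between `shell x y i` and `shell y x i`, counted from both sides, summed over `y`
  have h₁ := sum_add_mul_eq_mul fun y hy =>
    hN y hy ▸ h.shellEdgeCount_add_c ((mem_neighborFinset ..).1 hy) i
  have h₂ := sum_add_mul_eq_mul fun y hy =>
    hN y hy ▸ h.shellEdgeCount_add_c ((mem_neighborFinset ..).1 hy).symm i
  simp_rw [shellEdgeCount_comm _ x] at h₂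
  rw [hA] at h₁
  rw [hA'] at h₂
  refine Nat.eq_of_mul_eq_mul_left (h.card_sphere_pos hiv) ?_
  linarith

theorem b_mul_b_eq (h : IsDistanceBiregular G σ c b) {x v : V} {i : ℕ} (hi : Odd i)
    (hiv : i < G.dist x v) :
    b (σ x) i * b (σ x) (i + 1) = b (σ x + 1) i * b (σ x + 1) (i + 1) := by
  have hN : ∀ y ∈ G.neighborFinset x, σ y = σ x + 1 := fun y hy =>
    h.color_eq_add_one_of_adj ((mem_neighborFinset ..).1 hy)
  have hA : ∑ y ∈ G.neighborFinset x, #(G.shell x y i) = #(G.sphere x i) * b (σ x + 1) i := by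
    rw [h.sum_card_shell, sum_const_nat fun z hz => ?_]
    rw [h.connected.color_eq_add_one_of_odd_dist h.color_ne_of_adj ((mem_sphere.1 hz).symm ▸ hi)]
  have hA' : ∑ y ∈ G.neighborFinset x, #(G.shell y x i) = #(G.sphere x i) * b (σ x) i := by
    rw [h.sum_card_shell_swap, h.card_sphere_mul_b]
    refine sum_const_nat fun w hw => ?_
    rw [h.connected.color_eq_of_even_dist h.color_ne_of_adj
      ((mem_sphere.1 hw).symm ▸ hi.add_one)]
  have h₁ := sum_add_mul_eq_mul fun y hy =>
    hN y hy ▸ h.shellEdgeCount_add_b ((mem_neighborFinset ..).1 hy) i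
  have h₂ := sum_add_mul_eq_mul fun y hy =>
    hN y hy ▸ h.shellEdgeCount_add_b ((mem_neighborFinset ..).1 hy).symm i
  simp_rw [shellEdgeCount_comm _ x] at h₂
  rw [hA] at h₁
  rw [hA'] at h₂
  refine Nat.eq_of_mul_eq_mul_left (h.card_sphere_pos hiv.le) ?_
  linarith

variable {k : Fin 2 → ℕ}

theorem c_add_b_of_even (h : IsDistanceBiregular G σ c b) (hdeg : ∀ z, G.degree z = k (σ z))
    {u v : V} {j : ℕ} (hj : Even j) (hjv : j ≤ G.dist u v) : c (σ u) j + b (σ u) j = k (σ u) := by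
  obtain ⟨z, rfl⟩ := h.connected.exists_dist_eq hjv
  rw [h.c_add_b, hdeg, h.connected.color_eq_of_even_dist h.color_ne_of_adj hj]

theorem c_add_b_of_odd (h : IsDistanceBiregular G σ c b) (hdeg : ∀ z, G.degree z = k (σ z))
    {u v : V} {j : ℕ} (hj : Odd j) (hjv : j ≤ G.dist u v) :
    c (σ u) j + b (σ u) j = k (σ u + 1) := by
  obtain ⟨z, rfl⟩ := h.connected.exists_dist_eq hjv
  rw [h.c_add_b, hdeg, h.connected.color_eq_add_one_of_odd_dist h.color_ne_of_adj hj]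

theorem c_add_b_of_color_eq_zero (h : IsDistanceBiregular G σ c b) (hdeg : ∀ z, G.degree z = k (σ z))
    {x v : V} (hx : σ x = 0) {j : ℕ} (hjv : j < G.dist x v) :
    (Even j → c 0 j + b 0 j = k 0 ∧ c 1 j + b 1 j = k 1) ∧
      (Odd j → c 0 j + b 0 j = k 1 ∧ c 1 j + b 1 j = k 0) := by
  obtain ⟨y, hxy, hyv⟩ := h.connected.exists_adj_dist_le (x := x) (v := v) (by omega)
  have hy : σ y = 1 := by rw [h.color_eq_add_one_of_adj hxy, hx]; rfl
  have hjy : j ≤ G.dist y v := by omega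
  refine ⟨fun hj => ?_, fun hj => ?_⟩
  · rw [← hx, ← hy]
    exact ⟨h.c_add_b_of_even hdeg hj hjv.le, h.c_add_b_of_even hdeg hj hjy⟩
  · have h₀ := h.c_add_b_of_odd hdeg hj hjv.le
    have h₁ := h.c_add_b_of_odd hdeg hj hjy
    rw [hx] at h₀
    rw [hy] at h₁
    exact ⟨h₀, h₁⟩

theorem mul_c_lt_mul_c (h : IsDistanceBiregular G σ c b) (hdeg : ∀ z, G.degree z = k (σ z))
    (hk : k 1 < k 0) {x v : V} (hx : σ x = 0) {j : ℕ} (hj : 1 ≤ j) (hjv : j < G.dist x v) :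
    (Even j → k 1 * c 0 j < k 0 * c 1 j) ∧ (Odd j → k 1 * c 1 j < k 0 * c 0 j) := by
  induction j, hj using Nat.le_induction with
  | base =>
    obtain ⟨y, hxy, -⟩ := h.connected.exists_adj_dist_le (x := x) (v := v) (by omega)
    have hc₀ := h.c_one (dist_eq_one_iff_adj.2 hxy)
    have hc₁ := h.c_one (dist_eq_one_iff_adj.2 hxy.symm)
    rw [h.color_eq_add_one_of_adj hxy, hx, zero_add] at hc₁
    rw [hx] at hc₀
    exact ⟨fun h₁ => absurd h₁ Nat.not_even_one, fun _ => by simpa [hc₀, hc₁] using hk⟩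
  | succ n hn ih =>
    have ih := ih (by omega)
    have hnv : n < G.dist x v := by omega
    rcases Nat.even_or_odd n with hn' | hn'
    · refine ⟨fun h₁ => absurd h₁ (Nat.not_even_iff_odd.2 hn'.add_one), fun _ => ?_⟩
      have he := h.c_mul_c_eq hn' hnv
      rw [hx, zero_add] at he
      exact Nat.mul_lt_mul_of_mul_eq_mul (ih.1 hn') he (hx ▸ h.c_pos hnv)
    · refine ⟨fun _ => ?_, fun h₁ => absurd h₁ (Nat.not_odd_iff_even.2 hn'.add_one)⟩
      obtain ⟨hs₀, hs₁⟩ := (h.c_add_b_of_color_eq_zero hdeg hx hnv).2 hn'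
      obtain ⟨hs₀', hs₁'⟩ := (h.c_add_b_of_color_eq_zero hdeg hx hjv).1 hn'.add_one
      have he := h.b_mul_b_eq hn' hnv
      rw [hx, zero_add] at he
      refine (Nat.mul_lt_mul_iff_of_add_eq hs₀' hs₁').2 ?_
      exact Nat.mul_lt_mul_of_mul_eq_mul ((Nat.mul_lt_mul_iff_of_add_eq hs₁ hs₀).1 (ih.2 hn')) he
        (hx ▸ h.b_pos hjv)

theorem mul_b_lt_mul_b_and_mul_c_lt_mul_c (h : IsDistanceBiregular G σ c b)
    (hdeg : ∀ z, G.degree z = k (σ z)) (hk : k 1 < k 0) {x v : V} (hx : σ x = 0) {i : ℕ}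
    (hi : 1 ≤ i) (hiv : i < G.dist x v) :
    (Even i → k 0 * b 1 i < k 1 * b 0 i ∧ k 1 * c 0 i < k 0 * c 1 i) ∧
      (Odd i → k 0 * b 0 i < k 1 * b 1 i ∧ k 1 * c 1 i < k 0 * c 0 i) := by
  have hc := h.mul_c_lt_mul_c hdeg hk hx hi hiv
  have hs := h.c_add_b_of_color_eq_zero hdeg hx hiv
  refine ⟨fun he => ?_, fun ho => ?_⟩
  · obtain ⟨hs₀, hs₁⟩ := hs.1 he
    exact ⟨(Nat.mul_lt_mul_iff_of_add_eq hs₀ hs₁).1 (hc.1 he), hc.1 he⟩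
  · obtain ⟨hs₀, hs₁⟩ := hs.2 ho
    exact ⟨(Nat.mul_lt_mul_iff_of_add_eq hs₁ hs₀).1 (hc.2 ho), hc.2 ho⟩

end IsDistanceBiregular
end SimpleGraph

theorem stmt7_general {V : Type} [Fintype V]
    (G : SimpleGraph V) [DecidableRel G.Adj]
    (hconn : G.Connected)
    (σ : V → Fin 2)
    (hbip : ∀ x y : V, G.Adj x y → σ x ≠ σ y)
    (k : Fin 2 → ℕ)
    (hdeg : ∀ x : V, G.degree x = k (σ x))
    (c b : Fin 2 → ℕ → ℕ)
    (hc : ∀ (x y : V) (i : ℕ), G.dist x y = i →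
      (Finset.univ.filter (fun z => G.dist x z = i - 1 ∧ G.Adj y z)).card = c (σ x) i)
    (hb : ∀ (x y : V) (i : ℕ), G.dist x y = i →
      (Finset.univ.filter (fun z => G.dist x z = i + 1 ∧ G.Adj y z)).card = b (σ x) i)
    (D : Fin 2 → ℕ)
    (hDmax : ∀ ℓ : Fin 2, ∃ x y : V, σ x = ℓ ∧ G.dist x y = D ℓ)
    (hk01 : k 1 < k 0) :
    ∀ i : ℕ, 1 ≤ i → i ≤ D 0 - 1 →
      (Even i → k 0 * b 1 i < k 1 * b 0 i ∧ k 1 * c 0 i < k 0 * c 1 i) ∧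
      (Odd i → k 0 * b 0 i < k 1 * b 1 i ∧ k 1 * c 1 i < k 0 * c 0 i) := by
  have hG : G.IsDistanceBiregular σ c b :=
    { connected := hconn
      color_ne_of_adj := hbip
      card_c := fun x y => by
        rw [← hc x y _ rfl]
        exact congrArg card (by ext; simp [and_comm])
      card_b := fun x y => by
        rw [← hb x y _ rfl]
        exact congrArg card (by ext; simp [and_comm]) }
  obtain ⟨x, v, hx, hxv⟩ := hDmax 0
  intro i hi hiD
  exact hG.mul_b_lt_mul_b_and_mul_c_lt_mul_c hdeg hk01 hx hi (v := v) (by omega)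

theorem stmt7 {V : Type} [Fintype V] [DecidableEq V]
    (G : SimpleGraph V) [DecidableRel G.Adj]
    (hconn : G.Connected) (hcard : 2 ≤ Fintype.card V)
    (σ : V → Fin 2)
    (hbip : ∀ x y : V, G.Adj x y → σ x ≠ σ y)
    (k : Fin 2 → ℕ)
    (hdeg : ∀ x : V, G.degree x = k (σ x))
    (c b : Fin 2 → ℕ → ℕ)
    (hc : ∀ (x y : V) (i : ℕ), G.dist x y = i →
      (Finset.univ.filter (fun z => G.dist x z = i - 1 ∧ G.Adj y z)).card = c (σ x) i)
    (hb : ∀ (x y : V) (i : ℕ), G.dist x y = i →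
      (Finset.univ.filter (fun z => G.dist x z = i + 1 ∧ G.Adj y z)).card = b (σ x) i)
    (D : Fin 2 → ℕ)
    (hDub : ∀ x y : V, G.dist x y ≤ D (σ x))
    (hDmax : ∀ ℓ : Fin 2, ∃ x y : V, σ x = ℓ ∧ G.dist x y = D ℓ)
    (hD0 : 1 ≤ D 0) (hD01 : D 0 ≤ D 1)
    (hk01 : k 1 < k 0) :
    ∀ i : ℕ, 1 ≤ i → i ≤ D 0 - 1 →
      (Even i → k 0 * b 1 i < k 1 * b 0 i ∧ k 1 * c 0 i < k 0 * c 1 i) ∧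
      (Odd i → k 0 * b 0 i < k 1 * b 1 i ∧ k 1 * c 1 i < k 0 * c 0 i) :=
  stmt7_general G hconn σ hbip k hdeg c b hc hb D hDmax hk01
end

section
/- Let Γ be a distance-biregular graph, y ∈ V_ℓ and x ∈ V_{ℓ̂} with ℓ, ℓ̂ ∈ {0,1}. Then ν^y(x) − ν^x(y) = (n−1)·(1/k_ℓ − 1/k_{ℓ̂}); equivalently q_{ℓ,d(x,y)} = q_{ℓ̂,d(x,y)} + (n−1)·(1/k_ℓ − 1/k_{ℓ̂}). -/
/-!
Around every vertex `x` the graph is distance-regular with no edges inside a sphere, and the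
edge count `k i * b i = k (i + 1) * c (i + 1)` between consecutive spheres makes the radial
function `z ↦ q (d x z)` have Laplacian `1` off `x`; by uniqueness it is `ν x`. In particular
`ν u v = (n - 1) / k (σ u)` on edges. Symmetry of the Laplacian gives
`n * (ν y x - ν x y) = ∑ ν y - ∑ ν x`, so `w ↦ ∑ ν w - n * (n - 1) / k (σ w)` is constant along
edges, hence constant on the connected graph, and the identity follows.
-/

open Finset SimpleGraph

namespace SimpleGraph

variable {V : Type*} {G : SimpleGraph V}

lemma Walk.dist_getVert {u v : V} (p : G.Walk u v) (hp : p.length = G.dist u v) {i : ℕ}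
    (hi : i ≤ p.length) : G.dist u (p.getVert i) = i := by
  have h := length_eq_dist_of_subwalk hp (p.isSubwalk_take i)
  rw [Walk.take_length, min_eq_left hi] at h
  exact h.symm

lemma Connected.exists_dist_eq_of_le_s9 (hG : G.Connected) {x w : V} {i : ℕ}
    (hi : i ≤ G.dist x w) : ∃ y, G.dist x y = i := by
  obtain ⟨p, hp⟩ := hG.exists_walk_length_eq_dist x w
  exact ⟨p.getVert i, p.dist_getVert hp (hp ▸ hi)⟩

lemma Connected.exists_adj_dist_eq_of_dist_eq_succ (hG : G.Connected) {x w : V} {j : ℕ}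
    (hw : G.dist x w = j + 1) : ∃ z, G.Adj w z ∧ G.dist x z = j := by
  obtain ⟨p, hp⟩ := hG.exists_walk_length_eq_dist x w
  have hadj := p.adj_getVert_succ (i := j) (by omega)
  rw [show j + 1 = p.length by omega, Walk.getVert_length] at hadj
  exact ⟨p.getVert j, hadj.symm, p.dist_getVert hp (by omega)⟩

lemma Coloring.dist_ne_of_adj (C : G.Coloring Bool) (hG : G.Connected) (x : V) {z w : V}
    (h : G.Adj z w) : G.dist x z ≠ G.dist x w := by
  intro hzw
  obtain ⟨p, hp⟩ := hG.exists_walk_length_eq_dist x z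
  obtain ⟨p', hp'⟩ := hG.exists_walk_length_eq_dist x w
  have hz := C.even_length_iff_congr p
  have hw := C.even_length_iff_congr p'
  rw [hp, hzw, ← hp', hw] at hz
  exact C.valid h (by cases hcz : C z <;> cases hcw : C w <;> simp_all)

noncomputable def radialPotential (n : ℕ) (c k : ℕ → ℕ) (m : ℕ) : ℝ :=
  ∑ j ∈ Icc 1 m, ((n : ℝ) - ∑ t ∈ range j, (k t : ℝ)) / ((k j : ℝ) * (c j : ℝ))

@[simp]
lemma radialPotential_zero (n : ℕ) (c k : ℕ → ℕ) : radialPotential n c k 0 = 0 := by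
  simp [radialPotential]

lemma radialPotential_succ (n : ℕ) (c k : ℕ → ℕ) (m : ℕ) :
    radialPotential n c k (m + 1) = radialPotential n c k m +
      ((n : ℝ) - ∑ t ∈ range (m + 1), (k t : ℝ)) /
        ((k (m + 1) : ℝ) * (c (m + 1) : ℝ)) := by
  rw [radialPotential, radialPotential, sum_Icc_succ_top (by omega)]

variable [Fintype V] [DecidableRel G.Adj]

structure IsDistanceRegularAround (G : SimpleGraph V) [DecidableRel G.Adj] (x : V)
    (c b k : ℕ → ℕ) : Prop where
  card_down : ∀ (y : V) (i : ℕ), G.dist x y = i →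
    #{z | G.dist x z = i - 1 ∧ G.Adj y z} = c i
  card_up : ∀ (y : V) (i : ℕ), G.dist x y = i →
    #{z | G.dist x z = i + 1 ∧ G.Adj y z} = b i
  card_sphere : ∀ i : ℕ, #{y | G.dist x y = i} = k i

namespace IsDistanceRegularAround

variable {x : V} {c b k : ℕ → ℕ}

lemma sum_neighborFinset (hreg : G.IsDistanceRegularAround x c b k)
    (hlayer : ∀ z w, G.Adj z w → G.dist x z ≠ G.dist x w) (g : ℕ → ℝ) {z : V} {i : ℕ}
    (hz : G.dist x z = i + 1) :
    ∑ w ∈ G.neighborFinset z, g (G.dist x w) = c (i + 1) * g i + b (i + 1) * g (i + 2) := by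
  have hdown : {w ∈ G.neighborFinset z | G.dist x w = i} =
      ({w | G.dist x w = i + 1 - 1 ∧ G.Adj z w} : Finset V) := by
    ext w
    simp [and_comm]
  have hup : {w ∈ G.neighborFinset z | ¬G.dist x w = i} =
      ({w | G.dist x w = i + 1 + 1 ∧ G.Adj z w} : Finset V) := by
    ext w
    simp only [mem_filter, mem_neighborFinset, mem_univ, true_and]
    refine ⟨fun ⟨h, hi⟩ => ⟨?_, h⟩, fun ⟨hi, h⟩ => ⟨h, by omega⟩⟩
    have := hlayer z w h
    rcases h.diff_dist_adj (u := x) with h' | h' | h' <;> omega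
  rw [← sum_filter_add_sum_filter_not _ (fun w => G.dist x w = i),
    sum_eq_card_nsmul (b := g i) (fun w hw => by rw [(mem_filter.1 hw).2]),
    sum_eq_card_nsmul (b := g (i + 2)) (fun w hw => by rw [hup, mem_filter] at hw; rw [hw.2.1]),
    hdown, hup, hreg.card_down z _ hz, hreg.card_up z _ hz, nsmul_eq_mul, nsmul_eq_mul]

lemma card_sphere_mul_card_up (hreg : G.IsDistanceRegularAround x c b k) (i : ℕ) :
    k i * b i = k (i + 1) * c (i + 1) := by
  rw [← hreg.card_sphere i, ← hreg.card_sphere (i + 1)]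
  refine card_mul_eq_card_mul G.Adj (fun z hz => ?_) (fun w hw => ?_)
  · rw [← hreg.card_up z i (mem_filter.1 hz).2, bipartiteAbove, filter_filter]
  · rw [← hreg.card_down w (i + 1) (mem_filter.1 hw).2, bipartiteBelow, filter_filter,
      Nat.add_sub_cancel]
    simp only [adj_comm]

lemma card_eq_sum_card_sphere (hreg : G.IsDistanceRegularAround x c b k) {m : ℕ}
    (hm : ∀ w, G.dist x w ≤ m) : Fintype.card V = ∑ t ∈ range (m + 1), k t := by
  rw [← card_univ, card_eq_sum_card_fiberwise (f := G.dist x) (t := range (m + 1))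
    (fun w _ => mem_range.2 (Nat.lt_succ_of_le (hm w)))]
  exact sum_congr rfl fun t _ => hreg.card_sphere t

lemma mul_radialPotential_succ_sub (hG : G.Connected) (hreg : G.IsDistanceRegularAround x c b k)
    (m : ℕ) :
    (k (m + 1) * c (m + 1) : ℝ) * (radialPotential (Fintype.card V) c k (m + 1) -
      radialPotential (Fintype.card V) c k m) =
      Fintype.card V - ∑ t ∈ range (m + 1), (k t : ℝ) := by
  rw [radialPotential_succ, add_sub_cancel_left]
  -- Beyond the eccentricity of `x` the increment is a junk `0 / 0`; there both sides vanish.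
  by_cases hfar : ∃ w, m + 1 ≤ G.dist x w
  · obtain ⟨w, hw⟩ := hfar
    obtain ⟨y, hy⟩ := hG.exists_dist_eq_of_le_s9 hw
    obtain ⟨z, hyz, hz⟩ := hG.exists_adj_dist_eq_of_dist_eq_succ hy
    have hk : k (m + 1) ≠ 0 := by
      rw [← hreg.card_sphere]
      exact (card_pos.2 ⟨y, by simp [hy]⟩).ne'
    have hc : c (m + 1) ≠ 0 := by
      rw [← hreg.card_down y _ hy]
      exact (card_pos.2 ⟨z, by simp [hz, hyz]⟩).ne'
    field_simp
  · simp only [not_exists, not_le] at hfar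
    rw [hreg.card_eq_sum_card_sphere (m := m) (fun w => Nat.le_of_lt_succ (hfar w))]
    push_cast
    simp

end IsDistanceRegularAround

section Laplacian

open Matrix

variable [DecidableEq V]

lemma sum_lapMatrix_mulVec (f : V → ℝ) : ∑ z, (G.lapMatrix ℝ *ᵥ f) z = 0 := by
  have h := dotProduct_mulVec (fun _ => (1 : ℝ)) (G.lapMatrix ℝ) f
  rw [← mulVec_transpose, (isSymm_lapMatrix ℝ G).eq, lapMatrix_mulVec_const_eq_zero,
    zero_dotProduct] at h
  simpa [dotProduct] using h

lemma dotProduct_lapMatrix_mulVec_comm (f g : V → ℝ) :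
    f ⬝ᵥ (G.lapMatrix ℝ *ᵥ g) = (G.lapMatrix ℝ *ᵥ f) ⬝ᵥ g := by
  rw [dotProduct_mulVec, ← mulVec_transpose, (isSymm_lapMatrix ℝ G).eq]

structure IsEquilibriumMeasure (G : SimpleGraph V) [DecidableRel G.Adj] (x : V) (f : V → ℝ) :
    Prop where
  apply_self : f x = 0
  lapMatrix_mulVec_apply_of_ne : ∀ y, y ≠ x → (G.lapMatrix ℝ *ᵥ f) y = 1

namespace IsEquilibriumMeasure

variable {x : V} {f : V → ℝ}

lemma lapMatrix_mulVec_apply_self (hf : G.IsEquilibriumMeasure x f) :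
    (G.lapMatrix ℝ *ᵥ f) x = 1 - Fintype.card V := by
  have h := sum_lapMatrix_mulVec (G := G) f
  rw [← add_sum_erase _ _ (mem_univ x),
    sum_congr rfl fun y hy => hf.lapMatrix_mulVec_apply_of_ne y (ne_of_mem_erase hy),
    sum_const, card_erase_of_mem (mem_univ x), card_univ, nsmul_one,
    Nat.cast_pred (Fintype.card_pos_iff.2 ⟨x⟩)] at h
  linarith

lemma lapMatrix_mulVec_dotProduct (hf : G.IsEquilibriumMeasure x f) (g : V → ℝ) :
    (G.lapMatrix ℝ *ᵥ f) ⬝ᵥ g = ∑ z, g z - Fintype.card V * g x := by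
  rw [dotProduct, ← add_sum_erase _ _ (mem_univ x), ← add_sum_erase _ g (mem_univ x),
    sum_congr rfl fun y hy => by rw [hf.lapMatrix_mulVec_apply_of_ne y (ne_of_mem_erase hy),
      one_mul], hf.lapMatrix_mulVec_apply_self]
  ring

lemma sum_neighborFinset (hf : G.IsEquilibriumMeasure x f) :
    ∑ w ∈ G.neighborFinset x, f w = Fintype.card V - 1 := by
  have h := hf.lapMatrix_mulVec_apply_self
  rw [lapMatrix_mulVec_apply, hf.apply_self, mul_zero] at h
  linarith

lemma apply_eq_of_adj (hf : G.IsEquilibriumMeasure x f) {v : V} (hv : G.Adj x v)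
    (hconst : ∀ w, G.Adj x w → f w = f v) : f v = (Fintype.card V - 1) / G.degree x := by
  have hdeg : (G.degree x : ℝ) ≠ 0 :=
    Nat.cast_ne_zero.2 (G.degree_pos_iff_exists_adj x |>.2 ⟨v, hv⟩).ne'
  rw [eq_div_iff hdeg, ← hf.sum_neighborFinset, sum_eq_card_nsmul fun w hw => hconst w
    ((mem_neighborFinset G x w).1 hw), card_neighborFinset_eq_degree, nsmul_eq_mul, mul_comm]

lemma unique (hG : G.Connected) {g : V → ℝ} (hf : G.IsEquilibriumMeasure x f)
    (hg : G.IsEquilibriumMeasure x g) : f = g := by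
  have harm : G.lapMatrix ℝ *ᵥ (f - g) = 0 := by
    ext y
    rw [mulVec_sub, Pi.sub_apply, Pi.zero_apply, sub_eq_zero]
    rcases eq_or_ne y x with rfl | hy
    · rw [hf.lapMatrix_mulVec_apply_self, hg.lapMatrix_mulVec_apply_self]
    · rw [hf.lapMatrix_mulVec_apply_of_ne y hy, hg.lapMatrix_mulVec_apply_of_ne y hy]
  ext y
  have h := (lapMatrix_mulVec_eq_zero_iff_forall_reachable G).1 harm y x (hG y x)
  rw [Pi.sub_apply, Pi.sub_apply, hf.apply_self, hg.apply_self, sub_zero] at h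
  exact sub_eq_zero.1 h

lemma card_mul_sub_eq_sum_sub_sum {y : V} {g : V → ℝ} (hf : G.IsEquilibriumMeasure x f)
    (hg : G.IsEquilibriumMeasure y g) :
    Fintype.card V * (g x - f y) = ∑ z, g z - ∑ z, f z := by
  have h := dotProduct_lapMatrix_mulVec_comm (G := G) f g
  rw [dotProduct_comm, hg.lapMatrix_mulVec_dotProduct, hf.lapMatrix_mulVec_dotProduct] at h
  linarith

end IsEquilibriumMeasure

lemma equilibriumMeasure_sub_eq_of_forall_adj (hG : G.Connected) {ν : V → V → ℝ}
    (hν : ∀ x, G.IsEquilibriumMeasure x (ν x)) {φ : V → ℝ}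
    (hφ : ∀ u v, G.Adj u v → ν u v = φ u) (x y : V) : ν y x - ν x y = φ y - φ x := by
  set W : V → ℝ := fun w => ∑ z, ν w z - Fintype.card V * φ w
  have hW : G.lapMatrix ℝ *ᵥ W = 0 := by
    refine (lapMatrix_mulVec_eq_zero_iff_forall_adj G).2 fun u v huv => ?_
    have h := (hν u).card_mul_sub_eq_sum_sub_sum (hν v)
    rw [hφ v u huv.symm, hφ u v huv] at h
    simp only [W]
    linarith
  have hxy := (lapMatrix_mulVec_eq_zero_iff_forall_reachable G).1 hW x y (hG x y)
  have h := (hν x).card_mul_sub_eq_sum_sub_sum (hν y)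
  have hn : (Fintype.card V : ℝ) ≠ 0 := Nat.cast_ne_zero.2 (Fintype.card_pos_iff.2 ⟨x⟩).ne'
  simp only [W] at hxy
  exact mul_left_cancel₀ hn (by linarith)

namespace IsDistanceRegularAround

variable {x : V} {c b k : ℕ → ℕ}

lemma lapMatrix_mulVec_radialPotential_apply (hG : G.Connected)
    (hreg : G.IsDistanceRegularAround x c b k)
    (hlayer : ∀ z w, G.Adj z w → G.dist x z ≠ G.dist x w) {z : V} (hz : z ≠ x) :
    (G.lapMatrix ℝ *ᵥ fun w => radialPotential (Fintype.card V) c k (G.dist x w)) z = 1 := by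
  set q := radialPotential (Fintype.card V) c k
  obtain ⟨i, hi⟩ : ∃ i, G.dist x z = i + 1 :=
    Nat.exists_eq_add_one.2 (hG.pos_dist_of_ne hz.symm)
  have hdeg : (G.degree z : ℝ) = c (i + 1) + b (i + 1) := by
    have h := hreg.sum_neighborFinset hlayer (fun _ => 1) hi
    rwa [sum_const, card_neighborFinset_eq_degree, nsmul_one, mul_one, mul_one] at h
  have hk : (k (i + 1) : ℝ) ≠ 0 :=
    Nat.cast_ne_zero.2 (by rw [← hreg.card_sphere]; exact (card_pos.2 ⟨z, by simp [hi]⟩).ne')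
  have hdc : (k (i + 1) * b (i + 1) : ℝ) = k (i + 2) * c (i + 2) := by
    exact_mod_cast hreg.card_sphere_mul_card_up (i + 1)
  have hflux := hreg.mul_radialPotential_succ_sub hG i
  have hflux' := hreg.mul_radialPotential_succ_sub hG (i + 1)
  rw [sum_range_succ _ (i + 1)] at hflux'
  rw [lapMatrix_mulVec_apply, hreg.sum_neighborFinset hlayer q hi, hi, hdeg]
  refine mul_left_cancel₀ hk ?_
  -- After scaling by `k (i + 1)` the two flux identities telescope to `k (i + 1)`.
  linear_combination hflux - hflux' - (q (i + 2) - q (i + 1)) * hdc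

lemma isEquilibriumMeasure (hG : G.Connected) (hreg : G.IsDistanceRegularAround x c b k)
    (hlayer : ∀ z w, G.Adj z w → G.dist x z ≠ G.dist x w) :
    G.IsEquilibriumMeasure x fun w => radialPotential (Fintype.card V) c k (G.dist x w) :=
  ⟨by simp, fun _ hz => hreg.lapMatrix_mulVec_radialPotential_apply hG hlayer hz⟩

end IsDistanceRegularAround

end Laplacian

end SimpleGraph

theorem stmt9_general {V : Type} [Fintype V] [DecidableEq V]
    (G : SimpleGraph V) [DecidableRel G.Adj]
    (hconn : G.Connected)
    (σ : V → Fin 2)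
    (hbip : ∀ x y : V, G.Adj x y → σ x ≠ σ y)
    (k : Fin 2 → ℕ)
    (hdeg : ∀ x : V, G.degree x = k (σ x))
    (c b : Fin 2 → ℕ → ℕ)
    (hc : ∀ (x y : V) (i : ℕ), G.dist x y = i →
      (Finset.univ.filter (fun z => G.dist x z = i - 1 ∧ G.Adj y z)).card = c (σ x) i)
    (hb : ∀ (x y : V) (i : ℕ), G.dist x y = i →
      (Finset.univ.filter (fun z => G.dist x z = i + 1 ∧ G.Adj y z)).card = b (σ x) i)
    (kk : Fin 2 → ℕ → ℕ)
    (hkk : ∀ (x : V) (i : ℕ),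
      (Finset.univ.filter (fun y => G.dist x y = i)).card = kk (σ x) i)
    (ν : V → V → ℝ)
    (hν0 : ∀ x : V, ν x x = 0)
    (hνL : ∀ x y : V, y ≠ x →
      (G.degree y : ℝ) * ν x y - ∑ z ∈ G.neighborFinset y, ν x z = 1)
    (q : Fin 2 → ℕ → ℝ)
    (hq : ∀ (ℓ : Fin 2) (m : ℕ), q ℓ m = ∑ j ∈ Finset.Icc 1 m,
      ((Fintype.card V : ℝ) - ∑ t ∈ Finset.range j, (kk ℓ t : ℝ)) /
        ((kk ℓ j : ℝ) * (c ℓ j : ℝ))) :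
    ∀ x y : V,
      ν y x - ν x y =
        ((Fintype.card V : ℝ) - 1) * (1 / (k (σ y) : ℝ) - 1 / (k (σ x) : ℝ)) ∧
      q (σ y) (G.dist x y) = q (σ x) (G.dist x y) +
        ((Fintype.card V : ℝ) - 1) * (1 / (k (σ y) : ℝ) - 1 / (k (σ x) : ℝ)) := by
  let C : G.Coloring Bool := Coloring.mk (fun v => decide (σ v = 0)) fun h => by
    have := hbip _ _ h
    simp only [ne_eq, decide_eq_decide]
    omega
  have hν : ∀ x, G.IsEquilibriumMeasure x (ν x) := fun x =>
    ⟨hν0 x, fun y hy => (lapMatrix_mulVec_apply G y (ν x)).trans (hνL x y hy)⟩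
  have hradial : ∀ x, ν x = fun z => q (σ x) (G.dist x z) := fun x =>
    (hν x).unique hconn (funext (hq (σ x)) ▸
      IsDistanceRegularAround.isEquilibriumMeasure hconn ⟨hc x, hb x, hkk x⟩
        fun _ _ => C.dist_ne_of_adj hconn x)
  have hnbr : ∀ u v, G.Adj u v → ν u v = (Fintype.card V - 1) / k (σ u) := fun u v huv => by
    rw [(hν u).apply_eq_of_adj huv fun w huw => by
      simp [hradial u, dist_eq_one_iff_adj.2 huw, dist_eq_one_iff_adj.2 huv], hdeg]
  intro x y
  have hsub : ν y x - ν x y =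
      ((Fintype.card V : ℝ) - 1) * (1 / (k (σ y) : ℝ) - 1 / (k (σ x) : ℝ)) := by
    rw [equilibriumMeasure_sub_eq_of_forall_adj hconn hν hnbr x y]
    ring
  refine ⟨hsub, ?_⟩
  simp only [hradial, SimpleGraph.dist_comm (u := y)] at hsub
  linarith

theorem stmt9 {V : Type} [Fintype V] [DecidableEq V]
    (G : SimpleGraph V) [DecidableRel G.Adj]
    (hconn : G.Connected) (hcard : 2 ≤ Fintype.card V)
    (σ : V → Fin 2)
    (hbip : ∀ x y : V, G.Adj x y → σ x ≠ σ y)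
    (k : Fin 2 → ℕ)
    (hdeg : ∀ x : V, G.degree x = k (σ x))
    (c b : Fin 2 → ℕ → ℕ)
    (hc : ∀ (x y : V) (i : ℕ), G.dist x y = i →
      (Finset.univ.filter (fun z => G.dist x z = i - 1 ∧ G.Adj y z)).card = c (σ x) i)
    (hb : ∀ (x y : V) (i : ℕ), G.dist x y = i →
      (Finset.univ.filter (fun z => G.dist x z = i + 1 ∧ G.Adj y z)).card = b (σ x) i)
    (D : Fin 2 → ℕ)
    (hDub : ∀ x y : V, G.dist x y ≤ D (σ x))
    (hDmax : ∀ ℓ : Fin 2, ∃ x y : V, σ x = ℓ ∧ G.dist x y = D ℓ)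
    (hD0 : 1 ≤ D 0) (hD01 : D 0 ≤ D 1)
    (kk : Fin 2 → ℕ → ℕ)
    (hkk : ∀ (x : V) (i : ℕ),
      (Finset.univ.filter (fun y => G.dist x y = i)).card = kk (σ x) i)
    (ν : V → V → ℝ)
    (hν0 : ∀ x : V, ν x x = 0)
    (hνL : ∀ x y : V, y ≠ x →
      (G.degree y : ℝ) * ν x y - ∑ z ∈ G.neighborFinset y, ν x z = 1)
    (q : Fin 2 → ℕ → ℝ)
    (hq : ∀ (ℓ : Fin 2) (m : ℕ), q ℓ m = ∑ j ∈ Finset.Icc 1 m,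
      ((Fintype.card V : ℝ) - ∑ t ∈ Finset.range j, (kk ℓ t : ℝ)) /
        ((kk ℓ j : ℝ) * (c ℓ j : ℝ))) :
    ∀ x y : V,
      ν y x - ν x y =
        ((Fintype.card V : ℝ) - 1) * (1 / (k (σ y) : ℝ) - 1 / (k (σ x) : ℝ)) ∧
      q (σ y) (G.dist x y) = q (σ x) (G.dist x y) +
        ((Fintype.card V : ℝ) - 1) * (1 / (k (σ y) : ℝ) - 1 / (k (σ x) : ℝ)) :=
  stmt9_general G hconn σ hbip k hdeg c b hc hb kk hkk ν hν0 hνL q hq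
end
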